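/- arXiv:0806.1242 — 4 statements merged into one kernel-verified Lean document; each statement's English description precedes it below -/
import Mathlib

section
/- Let A_1, A_2, …, A_n be events in a probability space, and let H be a graph on vertex set {1, …, n} such that for each i, the event A_i is mutually independent of the family {A_j : ij ∉ E(H), j ≠ i}. If there exist real numbers 0 ≤ w_i < 1 such that for all i, Pr(A_i) ≤ w_i · ∏_{ij ∈ E(H)} (1 − w_j), then Pr(⋂_{i=1}^n A_i^c) ≥ ∏_{i=1}^n (1 − w_i) > 0; in particular, with positive probability no event A_i occurs. -/
/-!
Write `⋂_S` for the event that no `A j` with `j ∈ S` occurs. By strong induction on `S` one shows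
`P(A i ∩ ⋂_S) ≤ w i · P(⋂_S)` for `i ∉ S`: split `S` into the neighbours `S₁` of `i` and the rest
`S₂`; independence gives `P(A i ∩ ⋂_S) ≤ P(A i) P(⋂_{S₂})`, and removing the events of `S₁` one at
a time from `⋂_{S₂}` costs at most a factor `1 - w j` each, by the induction hypothesis on smaller
sets. The same peeling, applied to all events at once, yields `P(⋂_univ) ≥ ∏ (1 - w i)`.
-/

open MeasureTheory

section LocalLemma

variable {Ω ι : Type*} [MeasurableSpace Ω] {P : Measure Ω} [IsFiniteMeasure P]
  {A : ι → Set Ω} {w : ι → ℝ}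

lemma one_sub_mul_le_measureReal_diff {X B : Set Ω} (hB : MeasurableSet B) {c : ℝ}
    (h : P.real (B ∩ X) ≤ c * P.real X) : (1 - c) * P.real X ≤ P.real (X \ B) := by
  have := measureReal_inter_add_sdiff (μ := P) (s := X) hB
  rw [Set.inter_comm] at h
  linarith

variable [DecidableEq ι]

lemma prod_one_sub_mul_le_measureReal_biInter_compl (hA : ∀ j, MeasurableSet (A j))
    {T U : Finset ι} (hw : ∀ j ∈ T, w j ≤ 1)
    (hbound : ∀ j ∈ T, ∀ V ⊆ T, j ∉ V →
      P.real (A j ∩ ⋂ k ∈ V ∪ U, (A k)ᶜ) ≤ w j * P.real (⋂ k ∈ V ∪ U, (A k)ᶜ)) :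
    (∏ j ∈ T, (1 - w j)) * P.real (⋂ k ∈ U, (A k)ᶜ) ≤ P.real (⋂ k ∈ T ∪ U, (A k)ᶜ) := by
  induction T using Finset.induction_on with
  | empty => simp
  | @insert j T hj ih =>
    have hT : T ⊆ insert j T := Finset.subset_insert j T
    have hrest := ih (fun k hk => hw k (hT hk))
      (fun k hk V hV => hbound k (hT hk) V (hV.trans hT))
    have hpeel := one_sub_mul_le_measureReal_diff (hA j)
      (hbound j (Finset.mem_insert_self j T) T hT hj)
    rw [Finset.insert_union, Finset.set_biInter_insert, Set.inter_comm, ← Set.sdiff_eq,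
      Finset.prod_insert hj, mul_assoc]
    have hwj : 0 ≤ 1 - w j := sub_nonneg.mpr (hw j (Finset.mem_insert_self j T))
    exact (mul_le_mul_of_nonneg_left hrest hwj).trans hpeel

variable [Fintype ι] {H : SimpleGraph ι} [DecidableRel H.Adj]

lemma measureReal_inter_biInter_compl_le (hA : ∀ j, MeasurableSet (A j))
    (hindep : ∀ i (S : Finset ι), (∀ j ∈ S, ¬ H.Adj i j ∧ j ≠ i) →
      P.real (A i ∩ ⋂ j ∈ S, (A j)ᶜ) ≤ P.real (A i) * P.real (⋂ j ∈ S, (A j)ᶜ))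
    (hw0 : ∀ i, 0 ≤ w i) (hw1 : ∀ i, w i ≤ 1)
    (hPw : ∀ i, P.real (A i) ≤ w i * ∏ j ∈ Finset.univ.filter (fun j => H.Adj i j), (1 - w j))
    (S : Finset ι) {i : ι} (hi : i ∉ S) :
    P.real (A i ∩ ⋂ j ∈ S, (A j)ᶜ) ≤ w i * P.real (⋂ j ∈ S, (A j)ᶜ) := by
  induction S using Finset.strongInduction generalizing i with
  | H S ih =>
    set S₁ := S.filter (fun j => H.Adj i j)
    set S₂ := S.filter (fun j => ¬ H.Adj i j)
    have hS₂ : S₂ ⊆ S := Finset.filter_subset _ S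
    have hindep₂ := hindep i S₂ fun j hj =>
      ⟨(Finset.mem_filter.mp hj).2, fun hji => hi (hji ▸ hS₂ hj)⟩
    have hnbrs : ∏ j ∈ Finset.univ.filter (fun j => H.Adj i j), (1 - w j)
        ≤ ∏ j ∈ S₁, (1 - w j) :=
      Finset.prod_le_prod_of_subset_of_le_one
        (Finset.monotone_filter_left _ (Finset.subset_univ S))
        (fun j _ => sub_nonneg.mpr (hw1 j)) (fun j _ _ => by linarith [hw0 j])
    have hpeel : (∏ j ∈ S₁, (1 - w j)) * P.real (⋂ k ∈ S₂, (A k)ᶜ)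
        ≤ P.real (⋂ k ∈ S₁ ∪ S₂, (A k)ᶜ) := by
      refine prod_one_sub_mul_le_measureReal_biInter_compl hA (fun j _ => hw1 j) ?_
      intro j hj V hV hjV
      have hjS₂ : j ∉ V ∪ S₂ := by
        simp only [Finset.mem_union, Finset.mem_filter, S₂, (Finset.mem_filter.mp hj).2]
        tauto
      have hsub : V ∪ S₂ ⊂ S := Finset.ssubset_iff_subset_ne.mpr
        ⟨Finset.union_subset (hV.trans (Finset.filter_subset _ S)) hS₂,
          fun h => hjS₂ (h ▸ (Finset.mem_filter.mp hj).1)⟩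
      exact ih _ hsub hjS₂
    rw [Finset.filter_union_filter_not_eq] at hpeel
    calc P.real (A i ∩ ⋂ j ∈ S, (A j)ᶜ)
        ≤ P.real (A i ∩ ⋂ j ∈ S₂, (A j)ᶜ) :=
          measureReal_mono (Set.inter_subset_inter_right _ (Set.biInter_subset_biInter_left hS₂))
      _ ≤ P.real (A i) * P.real (⋂ j ∈ S₂, (A j)ᶜ) := hindep₂
      _ ≤ w i * (∏ j ∈ S₁, (1 - w j)) * P.real (⋂ j ∈ S₂, (A j)ᶜ) := by
          gcongr
          exact (hPw i).trans (mul_le_mul_of_nonneg_left hnbrs (hw0 i))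
      _ ≤ w i * P.real (⋂ j ∈ S, (A j)ᶜ) := by
          rw [mul_assoc]
          exact mul_le_mul_of_nonneg_left hpeel (hw0 i)

end LocalLemma

/-- The (asymmetric) Lovász Local Lemma.  `H` is a dependency graph for the events
`A 1, …, A n`: each `A i` is mutually independent of the family of events `A j` with
`j` not adjacent to `i` (and `j ≠ i`).  If there are weights `0 ≤ w i < 1` with
`Pr(A i) ≤ w i · ∏_{ij ∈ E(H)} (1 - w j)` for every `i`, then
`Pr(⋂ i, (A i)ᶜ) ≥ ∏ i (1 - w i) > 0`; in particular with positive probability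
no event `A i` occurs. -/
theorem stmt1 {Ω : Type*} [MeasurableSpace Ω] (P : Measure Ω) [IsProbabilityMeasure P]
    (n : ℕ) (A : Fin n → Set Ω) (hA : ∀ i, MeasurableSet (A i))
    (H : SimpleGraph (Fin n)) [DecidableRel H.Adj]
    (hindep : ∀ i : Fin n, ∀ S : Finset (Fin n),
      (∀ j ∈ S, ¬ H.Adj i j ∧ j ≠ i) →
      (P (A i ∩ ⋂ j ∈ S, (A j)ᶜ)).toReal
        = (P (A i)).toReal * (P (⋂ j ∈ S, (A j)ᶜ)).toReal)
    (w : Fin n → ℝ) (hw0 : ∀ i, 0 ≤ w i) (hw1 : ∀ i, w i < 1)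
    (hPw : ∀ i, (P (A i)).toReal ≤
      w i * ∏ j ∈ Finset.univ.filter (fun j => H.Adj i j), (1 - w j)) :
    (∏ i, (1 - w i)) ≤ (P (⋂ i, (A i)ᶜ)).toReal ∧
      0 < (∏ i, (1 - w i)) ∧ 0 < (P (⋂ i, (A i)ᶜ)).toReal := by
  simp only [← measureReal_def] at hindep hPw ⊢
  have hbound := measureReal_inter_biInter_compl_le hA (fun i S hS => (hindep i S hS).le)
    hw0 (fun i => (hw1 i).le) hPw
  have hkey := prod_one_sub_mul_le_measureReal_biInter_compl (P := P) (T := Finset.univ)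
    (U := ∅) hA (fun j _ => (hw1 j).le) (fun j _ V _ hjV => hbound _ (by simpa using hjV))
  have hprod : 0 < ∏ i, (1 - w i) := Finset.prod_pos fun i _ => sub_pos.mpr (hw1 i)
  simp only [Finset.union_empty, Finset.notMem_empty, Set.iInter_of_empty, Set.iInter_univ,
    probReal_univ, mul_one, Finset.mem_univ, Set.iInter_true] at hkey
  exact ⟨hkey, hprod, hprod.trans_le hkey⟩
end

section
/- A proper coloring c of a finite simple graph G is a star coloring if and only if the edges of G can be oriented so that for every vertex v, |N⁻(v)| = |C⁻(v)| (i.e., the in-neighbors of v receive pairwise distinct colors) and C⁻(v) ∩ C⁺(v) = ∅. -/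
/-- A proper coloring: adjacent vertices receive different colors. -/
def IsProperColoring {V : Type*} (G : SimpleGraph V) (f : V → ℕ) : Prop :=
  ∀ ⦃x y⦄, G.Adj x y → f x ≠ f y

/-- A star coloring: a proper coloring with no two-colored path on four vertices. -/
def IsStarColoring {V : Type*} (G : SimpleGraph V) (f : V → ℕ) : Prop :=
  IsProperColoring G f ∧
  ∀ a b c d : V, G.Adj a b → G.Adj b c → G.Adj c d →
    a ≠ c → a ≠ d → b ≠ d → ¬ (f a = f c ∧ f b = f d)

/-- Lemma 5: a proper coloring `c` of `G` is a star coloring if and only if the edges of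
`G` can be oriented (here `D u v` means the edge `uv` is oriented with head `v`) so that
for every vertex `v` the in-neighbors of `v` receive pairwise distinct colors
(`|N⁻(v)| = |C⁻(v)|`) and the sets of in-colors and out-colors of `v` are disjoint
(`C⁻(v) ∩ C⁺(v) = ∅`). -/
theorem stmt4 {V : Type*} [Fintype V] (G : SimpleGraph V) (c : V → ℕ)
    (hproper : IsProperColoring G c) :
    IsStarColoring G c ↔
      ∃ D : V → V → Prop,
        (∀ u v : V, D u v → G.Adj u v) ∧
        (∀ u v : V, G.Adj u v → (D u v ↔ ¬ D v u)) ∧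
        (∀ v u w : V, D u v → D w v → c u = c w → u = w) ∧
        (∀ v u w : V, D u v → D v w → c u ≠ c w) := by
  constructor
  · rintro ⟨hp, hstar⟩
    -- P u v : u is a "center" w.r.t. the edge uv
    set P : V → V → Prop := fun u v => ∃ w, w ≠ v ∧ G.Adj u w ∧ c w = c v with hP
    set D : V → V → Prop := fun u v =>
      G.Adj u v ∧ (P u v ∨ (¬ P u v ∧ ¬ P v u ∧ c u < c v)) with hD
    -- key exclusion: not both centers
    have excl : ∀ u v, G.Adj u v → P u v → P v u → False := by
      rintro u v huv ⟨w, hwv, huw, hcw⟩ ⟨x, hxu, hvx, hcx⟩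
      have hcuv : c u ≠ c v := hproper huv
      have hwx : w ≠ x := by
        intro h; apply hcuv; rw [← hcx, ← h, hcw]
      exact hstar w u v x huw.symm huv hvx hwv hwx (fun h => hxu h.symm) ⟨hcw, hcx.symm⟩
    -- D u v and D v u can't both hold
    have antisym : ∀ u v, D u v → D v u → False := by
      rintro u v ⟨huv, h1⟩ ⟨hvu, h2⟩
      rcases h1 with h1 | ⟨hn1, hn2, hlt1⟩
      · rcases h2 with h2 | ⟨hn1', hn2', _⟩
        · exact excl u v huv h1 h2
        · exact hn2' h1
      · rcases h2 with h2 | ⟨_, _, hlt2⟩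
        · exact hn2 h2
        · exact absurd hlt2 (not_lt.mpr hlt1.le)
    refine ⟨D, fun u v h => h.1, ?_, ?_, ?_⟩
    · intro u v huv
      constructor
      · intro h1 h2; exact antisym u v h1 h2
      · intro hnvu
        by_cases hpu : P u v
        · exact ⟨huv, Or.inl hpu⟩
        by_cases hpv : P v u
        · exact absurd ⟨huv.symm, Or.inl hpv⟩ hnvu
        have hne : c u ≠ c v := hproper huv
        rcases lt_or_gt_of_ne hne with h | h
        · exact ⟨huv, Or.inr ⟨hpu, hpv, h⟩⟩
        · exact absurd ⟨huv.symm, Or.inr ⟨hpv, hpu, h⟩⟩ hnvu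
    · -- in-neighbors get distinct colors
      rintro v u w ⟨huv, h1⟩ ⟨hwv, h2⟩ hcuw
      by_contra hne
      -- if u uses the tie-break, then ¬ P v u, but w witnesses P v u
      have hPvu : P v u := ⟨w, fun h => hne h.symm, hwv.symm, hcuw.symm⟩
      have hPu : P u v := by
        rcases h1 with h1 | ⟨_, hn, _⟩
        · exact h1
        · exact absurd hPvu hn
      have hPvw : P v w := ⟨u, hne, huv.symm, hcuw⟩
      have hPw : P w v := by
        rcases h2 with h2 | ⟨_, hn, _⟩
        · exact h2
        · exact absurd hPvw hn
      -- both u and w are centers w.r.t. v : bicolored P4  y-u-v-w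
      obtain ⟨y, hyv, huy, hcy⟩ := hPu
      have hcuv : c u ≠ c v := hproper huv
      have hyw : y ≠ w := by
        intro h; rw [h] at hcy; rw [← hcuw] at hcy; exact hcuv hcy
      exact hstar y u v w huy.symm huv hwv.symm hyv hyw hne ⟨hcy, hcuw⟩
    · -- in-colors and out-colors disjoint
      rintro v u w ⟨huv, h1⟩ hDvw heq
      have hvw : G.Adj v w := hDvw.1
      have hne : u ≠ w := by
        rintro rfl
        exact antisym u v ⟨huv, h1⟩ hDvw
      have hPvu : P v u := ⟨w, fun h => hne h.symm, hvw, heq.symm⟩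
      have hPu : P u v := by
        rcases h1 with h1 | ⟨_, hn, _⟩
        · exact h1
        · exact absurd hPvu hn
      obtain ⟨y, hyv, huy, hcy⟩ := hPu
      have hcuv : c u ≠ c v := hproper huv
      have hyw : y ≠ w := by
        intro h; rw [h] at hcy; rw [← heq] at hcy; exact hcuv hcy
      exact hstar y u v w huy.symm huv hvw hyv hyw hne ⟨hcy, heq⟩
  · rintro ⟨D, hadj, hiff, hin, hout⟩
    refine ⟨hproper, ?_⟩
    rintro a b x d hab hbx hxd hax had hbd ⟨h1, h2⟩
    by_cases hDbx : D b x
    · have hDxd : D x d := by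
        by_contra h
        have hDdx : D d x := (hiff d x hxd.symm).mpr h
        exact hbd (hin x b d hDbx hDdx h2)
      exact hout x b d hDbx hDxd h2
    · have hDxb : D x b := (hiff x b hbx.symm).mpr hDbx
      have hDba : D b a := by
        by_contra h
        have hDab : D a b := (hiff a b hab).mpr h
        exact hax (hin b a x hDab hDxb h1)
      exact hout b x a hDxb hDba h1.symm
end

section
/- Let G be a finite simple graph, v a vertex of G, and let c be a degenerate coloring of the vertex-deleted subgraph G − v. If the neighbors of v in G receive pairwise distinct colors under c, and v is colored with a color different from the colors of all its neighbors, then the resulting coloring of G is a degenerate coloring of G. -/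
/-- A degenerate coloring: a proper coloring such that for every `k ≥ 1` the union of any
`k` color classes induces a `k`-degenerate subgraph. -/
def IsDegenerateColoring {V : Type*} (G : SimpleGraph V) (f : V → ℕ) : Prop :=
  IsProperColoring G f ∧
  ∀ k : ℕ, 1 ≤ k → ∀ S : Finset ℕ, S.card = k →
    ∀ W : Set V, W.Finite → W.Nonempty → (∀ v ∈ W, f v ∈ S) →
      ∃ v ∈ W, {u ∈ W | G.Adj v u}.ncard < k

/-!
If `v` lies in the vertex set `W`, then `v` itself has fewer than `k` neighbours in `W`: its
neighbours carry pairwise distinct colors from `S`, none of them equal to the color of `v`, so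
there are at most `k - 1` of them. If `v ∉ W`, then `W` lives in `G - v`, where the degenerate
coloring already provides a vertex of small degree.
-/

namespace SimpleGraph

variable {V : Type*} {G : SimpleGraph V} {f : V → ℕ}

theorem IsProperColoring.of_induce_ne {v : V}
    (h : IsProperColoring (G.induce {u : V | u ≠ v}) (fun u => f u.val))
    (hv : ∀ u : V, G.Adj v u → f v ≠ f u) : IsProperColoring G f := by
  intro x y hxy
  by_cases hx : x = v
  · subst hx
    exact hv y hxy
  by_cases hy : y = v
  · subst hy
    exact (hv x hxy.symm).symm
  exact h (x := ⟨x, hx⟩) (y := ⟨y, hy⟩) hxy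

theorem ncard_adj_lt_card_of_injOn {v : V} {W : Set V} {S : Finset ℕ}
    (hvW : v ∈ W) (hWcol : ∀ u ∈ W, f u ∈ S) (hinj : Set.InjOn f (G.neighborSet v))
    (hv : ∀ u : V, G.Adj v u → f v ≠ f u) :
    {u ∈ W | G.Adj v u}.ncard < S.card := by
  classical
  have himage : f '' {u ∈ W | G.Adj v u} ⊆ ↑(S.erase (f v)) := by
    rintro _ ⟨u, ⟨huW, hvu⟩, rfl⟩
    exact Finset.mem_erase.2 ⟨(hv u hvu).symm, hWcol u huW⟩
  calc {u ∈ W | G.Adj v u}.ncard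
      = (f '' {u ∈ W | G.Adj v u}).ncard :=
        (hinj.mono fun _ hu => hu.2).ncard_image.symm
    _ ≤ (S.erase (f v)).card := by
        simpa only [Set.ncard_coe_finset] using Set.ncard_le_ncard himage (Finset.finite_toSet _)
    _ < S.card := Finset.card_erase_lt_of_mem (hWcol v hvW)

theorem IsDegenerateColoring.exists_ncard_adj_lt_of_subset {s : Set V}
    (h : IsDegenerateColoring (G.induce s) (fun u => f u.val)) {k : ℕ} (hk : 1 ≤ k)
    {S : Finset ℕ} (hS : S.card = k) {W : Set V} (hWs : W ⊆ s) (hWfin : W.Finite)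
    (hWne : W.Nonempty) (hWcol : ∀ u ∈ W, f u ∈ S) :
    ∃ w ∈ W, {u ∈ W | G.Adj w u}.ncard < k := by
  obtain ⟨w₀, hw₀⟩ := hWne
  obtain ⟨w, hwW, hw⟩ := h.2 k hk S hS (Subtype.val ⁻¹' W)
    (hWfin.preimage Subtype.val_injective.injOn) ⟨⟨w₀, hWs hw₀⟩, hw₀⟩ fun u hu => hWcol u hu
  refine ⟨w, hwW, ?_⟩
  have hlift : {u ∈ W | G.Adj w u} =
      Subtype.val '' {u ∈ Subtype.val ⁻¹' W | (G.induce s).Adj w u} := by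
    ext u
    constructor
    · rintro ⟨huW, hwu⟩
      exact ⟨⟨u, hWs huW⟩, ⟨huW, hwu⟩, rfl⟩
    · rintro ⟨u, hu, rfl⟩
      exact hu
  rwa [hlift, Set.ncard_image_of_injective _ Subtype.val_injective]

end SimpleGraph

open SimpleGraph in
theorem stmt5_general {V : Type*} (G : SimpleGraph V) (v : V) (c : V → ℕ)
    (hdel : IsDegenerateColoring (G.induce {u : V | u ≠ v}) (fun u => c u.val))
    (hnbr : ∀ u w : V, G.Adj v u → G.Adj v w → u ≠ w → c u ≠ c w)
    (hv : ∀ u : V, G.Adj v u → c v ≠ c u) :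
    IsDegenerateColoring G c := by
  refine ⟨hdel.1.of_induce_ne hv, fun k hk S hS W hWfin hWne hWcol => ?_⟩
  by_cases hvW : v ∈ W
  · have hinj : Set.InjOn c (G.neighborSet v) := fun a ha b hb hab =>
      not_not.1 fun hne => hnbr a b ha hb hne hab
    exact ⟨v, hvW, hS ▸ ncard_adj_lt_card_of_injOn hvW hWcol hinj hv⟩
  · exact hdel.exists_ncard_adj_lt_of_subset hk hS (fun u hu huv => hvW (huv ▸ hu)) hWfin hWne
      hWcol

/-- Observation 6: if `c` restricted to the vertex-deleted subgraph `G - v` is a degenerate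
coloring, the neighbors of `v` receive pairwise distinct colors, and `v` gets a color
different from all colors of its neighbors, then `c` is a degenerate coloring of `G`. -/
theorem stmt5 {V : Type*} [Fintype V] (G : SimpleGraph V) (v : V) (c : V → ℕ)
    (hdel : IsDegenerateColoring (G.induce {u : V | u ≠ v}) (fun u => c u.val))
    (hnbr : ∀ u w : V, G.Adj v u → G.Adj v w → u ≠ w → c u ≠ c w)
    (hv : ∀ u : V, G.Adj v u → c v ≠ c u) :
    IsDegenerateColoring G c :=
  stmt5_general G v c hdel hnbr hv
end

section
/- Let G be a finite simple graph, v ∈ V(G), and let c be a proper coloring of G − v together with an orientation h of G − v satisfying, for every vertex x of G − v, |N⁻(x)| = |C⁻(x)| and C⁻(x) ∩ C⁺(x) = ∅. Suppose the neighbors of v in G receive pairwise distinct colors under c, and v is colored with a color different from the colors of all its neighbors and different from every color in C⁻(x) for each neighbor x of v. Then, orienting all edges incident with v towards v, the extended orientation of G again satisfies |N⁻(x)| = |C⁻(x)| and C⁻(x) ∩ C⁺(x) = ∅ for every vertex x of G; in particular, the extended coloring is a star coloring of G. -/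
/-!
Orient every edge at `v` towards `v`. At a vertex `x ≠ v` this only adds the out-neighbor `v`,
whose color is new to `C⁻(x)`; at `v` the in-neighbors are the neighbors of `v`, which have
distinct colors, and `v` has no out-neighbors. In such an orientation a two-colored path
`a b x d` is impossible: whichever way the middle edge `bx` points, its head sees two vertices of
the same color either both as in-neighbors or as an in- and an out-neighbor.
-/

theorem isStarColoring_of_orientation {V : Type*} {G : SimpleGraph V} {c : V → ℕ}
    {D : V → V → Prop} (hprop : IsProperColoring G c)
    (hori : ∀ u w, G.Adj u w → (D u w ↔ ¬ D w u))
    (hin : ∀ x u w, D u x → D w x → c u = c w → u = w)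
    (hinout : ∀ x u w, D u x → D x w → c u ≠ c w) :
    IsStarColoring G c := by
  have oriented : ∀ u w, G.Adj u w → D u w ∨ D w u := fun u w h =>
    (em (D u w)).imp_right (hori w u h.symm).2
  refine ⟨hprop, ?_⟩
  rintro a b x d hab hbx hxd hax - hbd ⟨hca, hcb⟩
  rcases oriented b x hbx with hbx' | hxb
  · rcases oriented x d hxd with hxd' | hdx
    · exact hinout x b d hbx' hxd' hcb
    · exact hbd (hin x b d hbx' hdx hcb)
  · rcases oriented a b hab with hab' | hba
    · exact hax (hin b a x hab' hxb hca)
    · exact hinout b x a hxb hba hca.symm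

def orientTowards {V : Type*} (G : SimpleGraph V) (D : V → V → Prop) (v : V) (a b : V) : Prop :=
  D a b ∨ (G.Adj a v ∧ b = v)

section orientTowards

variable {V : Type*} {G : SimpleGraph V} {D : V → V → Prop} {v : V} {c : V → ℕ}

theorem orientTowards.adj (hD : ∀ u w, D u w → G.Adj u w) {u w : V}
    (h : orientTowards G D v u w) : G.Adj u w := by
  rcases h with h | ⟨h, rfl⟩
  exacts [hD u w h, h]

theorem orientTowards_iff_not (hD : ∀ u w, D u w → G.Adj u w ∧ u ≠ v ∧ w ≠ v)
    (hOri : ∀ u w, G.Adj u w → u ≠ v → w ≠ v → (D u w ↔ ¬ D w u))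
    {u w : V} (huw : G.Adj u w) :
    orientTowards G D v u w ↔ ¬ orientTowards G D v w u := by
  have not_from_v : ∀ y, ¬ orientTowards G D v v y := by
    rintro y (h | ⟨h, -⟩)
    exacts [(hD v y h).2.1 rfl, G.loopless.irrefl v h]
  by_cases hu : u = v
  · subst hu
    exact iff_of_false (not_from_v w) (not_not.2 (Or.inr ⟨huw.symm, rfl⟩))
  by_cases hw : w = v
  · subst hw
    exact iff_of_true (Or.inr ⟨huw, rfl⟩) (not_from_v u)
  have away_from_v : ∀ a b, b ≠ v → (orientTowards G D v a b ↔ D a b) :=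
    fun _ _ hb => or_iff_left fun h => hb h.2
  rw [away_from_v u w hw, away_from_v w u hu]
  exact hOri u w huw hu hw

theorem orientTowards_eq_of_color_eq (hD : ∀ u w, D u w → G.Adj u w ∧ u ≠ v ∧ w ≠ v)
    (hIn : ∀ x u w, D u x → D w x → c u = c w → u = w)
    (hnbr : ∀ u w, G.Adj v u → G.Adj v w → u ≠ w → c u ≠ c w)
    {x u w : V} (hu : orientTowards G D v u x) (hw : orientTowards G D v w x)
    (hc : c u = c w) : u = w := by
  rcases hu with hu | ⟨hu, rfl⟩ <;> rcases hw with hw | ⟨hw, hxv⟩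
  · exact hIn x u w hu hw hc
  · exact absurd hxv (hD u x hu).2.2
  · exact absurd rfl (hD w _ hw).2.2
  · exact not_not.1 fun hne => hnbr u w hu.symm hw.symm hne hc

theorem orientTowards_color_ne (hD : ∀ u w, D u w → G.Adj u w ∧ u ≠ v ∧ w ≠ v)
    (hInOut : ∀ x u w, D u x → D x w → c u ≠ c w)
    (hcvIn : ∀ x u, G.Adj v x → D u x → c v ≠ c u)
    {x u w : V} (hu : orientTowards G D v u x) (hw : orientTowards G D v x w) : c u ≠ c w := by
  rcases hu with hu | ⟨-, rfl⟩ <;> rcases hw with hw | ⟨hw, hwv⟩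
  · exact hInOut x u w hu hw
  · exact hwv ▸ (hcvIn x u hw.symm hu).symm
  · exact absurd rfl (hD _ w hw).2.1
  · exact absurd (hwv ▸ hw) (G.loopless.irrefl _)

end orientTowards

theorem isProperColoring_of_ne_neighbors {V : Type*} {G : SimpleGraph V} {v : V} {c : V → ℕ}
    (hproper : ∀ x y, G.Adj x y → x ≠ v → y ≠ v → c x ≠ c y)
    (hcv : ∀ u, G.Adj v u → c v ≠ c u) : IsProperColoring G c := by
  intro x y hxy
  by_cases hx : x = v
  · subst hx; exact hcv y hxy
  by_cases hy : y = v
  · subst hy; exact (hcv x hxy.symm).symm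
  exact hproper x y hxy hx hy

theorem stmt14_general {V : Type*} (G : SimpleGraph V) (v : V) (c : V → ℕ)
    (D : V → V → Prop)
    (hproper : ∀ x y : V, G.Adj x y → x ≠ v → y ≠ v → c x ≠ c y)
    (hD : ∀ u w : V, D u w → G.Adj u w ∧ u ≠ v ∧ w ≠ v)
    (hOri : ∀ u w : V, G.Adj u w → u ≠ v → w ≠ v → (D u w ↔ ¬ D w u))
    (hIn : ∀ x u w : V, D u x → D w x → c u = c w → u = w)
    (hInOut : ∀ x u w : V, D u x → D x w → c u ≠ c w)
    (hnbr : ∀ u w : V, G.Adj v u → G.Adj v w → u ≠ w → c u ≠ c w)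
    (hcv : ∀ u : V, G.Adj v u → c v ≠ c u)
    (hcvIn : ∀ x u : V, G.Adj v x → D u x → c v ≠ c u) :
    (∀ u w : V, (fun a b => D a b ∨ (G.Adj a v ∧ b = v)) u w → G.Adj u w) ∧
    (∀ u w : V, G.Adj u w →
      ((fun a b => D a b ∨ (G.Adj a v ∧ b = v)) u w ↔
        ¬ (fun a b => D a b ∨ (G.Adj a v ∧ b = v)) w u)) ∧
    (∀ x u w : V, (fun a b => D a b ∨ (G.Adj a v ∧ b = v)) u x →
      (fun a b => D a b ∨ (G.Adj a v ∧ b = v)) w x → c u = c w → u = w) ∧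
    (∀ x u w : V, (fun a b => D a b ∨ (G.Adj a v ∧ b = v)) u x →
      (fun a b => D a b ∨ (G.Adj a v ∧ b = v)) x w → c u ≠ c w) ∧
    IsStarColoring G c := by
  have hori : ∀ u w, G.Adj u w → (orientTowards G D v u w ↔ ¬ orientTowards G D v w u) :=
    fun _ _ => orientTowards_iff_not hD hOri
  have hin : ∀ x u w, orientTowards G D v u x → orientTowards G D v w x → c u = c w → u = w :=
    fun _ _ _ => orientTowards_eq_of_color_eq hD hIn hnbr
  have hinout : ∀ x u w, orientTowards G D v u x → orientTowards G D v x w → c u ≠ c w :=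
    fun _ _ _ => orientTowards_color_ne hD hInOut hcvIn
  exact ⟨fun _ _ => orientTowards.adj fun u w h => (hD u w h).1, hori, hin, hinout,
    isStarColoring_of_orientation (isProperColoring_of_ne_neighbors hproper hcv) hori hin hinout⟩

/-- Extension step of Theorem 8: suppose `c` is a proper coloring of `G - v` and `D` is an
orientation of `G - v` (`D u w` means the edge `uw` has head `w`) such that every vertex
`x` of `G - v` has its in-neighbors colored by pairwise distinct colors
(`|N⁻(x)| = |C⁻(x)|`) and `C⁻(x) ∩ C⁺(x) = ∅`.  If the neighbors of `v` in `G` receive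
pairwise distinct colors, and the color of `v` differs from the colors of all its
neighbors and from every color in `C⁻(x)` for each neighbor `x` of `v`, then orienting
all edges incident with `v` towards `v` yields an orientation of `G` satisfying
`|N⁻(x)| = |C⁻(x)|` and `C⁻(x) ∩ C⁺(x) = ∅` for every vertex `x` of `G`; in particular
`c` is a star coloring of `G`. -/
theorem stmt14 {V : Type*} [Fintype V] (G : SimpleGraph V) (v : V) (c : V → ℕ)
    (D : V → V → Prop)
    (hproper : ∀ x y : V, G.Adj x y → x ≠ v → y ≠ v → c x ≠ c y)
    (hD : ∀ u w : V, D u w → G.Adj u w ∧ u ≠ v ∧ w ≠ v)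
    (hOri : ∀ u w : V, G.Adj u w → u ≠ v → w ≠ v → (D u w ↔ ¬ D w u))
    (hIn : ∀ x u w : V, D u x → D w x → c u = c w → u = w)
    (hInOut : ∀ x u w : V, D u x → D x w → c u ≠ c w)
    (hnbr : ∀ u w : V, G.Adj v u → G.Adj v w → u ≠ w → c u ≠ c w)
    (hcv : ∀ u : V, G.Adj v u → c v ≠ c u)
    (hcvIn : ∀ x u : V, G.Adj v x → D u x → c v ≠ c u) :
    (∀ u w : V, (fun a b => D a b ∨ (G.Adj a v ∧ b = v)) u w → G.Adj u w) ∧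
    (∀ u w : V, G.Adj u w →
      ((fun a b => D a b ∨ (G.Adj a v ∧ b = v)) u w ↔
        ¬ (fun a b => D a b ∨ (G.Adj a v ∧ b = v)) w u)) ∧
    (∀ x u w : V, (fun a b => D a b ∨ (G.Adj a v ∧ b = v)) u x →
      (fun a b => D a b ∨ (G.Adj a v ∧ b = v)) w x → c u = c w → u = w) ∧
    (∀ x u w : V, (fun a b => D a b ∨ (G.Adj a v ∧ b = v)) u x →
      (fun a b => D a b ∨ (G.Adj a v ∧ b = v)) x w → c u ≠ c w) ∧
    IsStarColoring G c :=
  stmt14_general G v c D hproper hD hOri hIn hInOut hnbr hcv hcvIn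
end
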